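/- Let G be sofic and H amenable. Then the unrestricted wreath product G ≀≀ H = (∏_{h∈H} G) ⋊ H is sofic. -/

import Mathlib

/-- Normalized Hamming distance on the symmetric group of a finite set. -/
noncomputable def hamDist {F : Type*} [Fintype F] (α β : Equiv.Perm F) : ℝ :=
  (Nat.card {f : F // α f ≠ β f} : ℝ) / (Fintype.card F : ℝ)

/-- A group is sofic if every finite subset admits `(K,ε)`-approximations into
finite symmetric groups with the normalized Hamming distance. -/
def IsSofic (G : Type*) [Group G] : Prop :=
  ∀ (K : Finset G) (ε : ℝ), 0 < ε →
    ∃ (F : Type) (_ : Fintype F) (_ : Nonempty F) (φ : G → Equiv.Perm F),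
      (∀ k₁ ∈ K, ∀ k₂ ∈ K, hamDist (φ (k₁ * k₂)) (φ k₁ * φ k₂) ≤ ε) ∧
      (∀ k₁ ∈ K, ∀ k₂ ∈ K, k₁ ≠ k₂ → 1 - ε ≤ hamDist (φ k₁) (φ k₂))

/-- Amenability via Følner sets: for every finite `S ⊆ G` and `ε > 0` there is a
nonempty finite `F ⊆ G` with `|F \ sF| < ε|F|` for all `s ∈ S`. -/
def IsAmenableFolner (G : Type*) [Group G] [DecidableEq G] : Prop :=
  ∀ (S : Finset G) (ε : ℝ), 0 < ε →
    ∃ F : Finset G, F.Nonempty ∧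
      ∀ s ∈ S, ((F \ F.image (s * ·)).card : ℝ) < ε * F.card

/-- The unrestricted wreath product `G ≀≀ H = (∏_{h∈H} G) ⋊ H`. -/
def Wr (G H : Type*) [Group G] [Group H] := (H → G) × H

namespace Wr

variable {G H : Type*} [Group G] [Group H]

/-- First (non-homomorphic) projection `G ≀≀ H → ∏_{h∈H} G`. -/
def fst (a : Wr G H) : H → G := a.1

/-- Second projection `G ≀≀ H → H`. -/
def snd (a : Wr G H) : H := a.2

instance instGroup : Group (Wr G H) where
  mul a b := (fun x => a.1 (b.2 * x) * b.1 x, a.2 * b.2)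
  one := (1, 1)
  inv a := (fun x => (a.1 (a.2⁻¹ * x))⁻¹, a.2⁻¹)
  mul_assoc a b c := by
    refine Prod.ext ?_ ?_
    · funext x
      show a.1 (b.2 * (c.2 * x)) * b.1 (c.2 * x) * c.1 x
          = a.1 (b.2 * c.2 * x) * (b.1 (c.2 * x) * c.1 x)
      rw [mul_assoc, mul_assoc]
    · exact mul_assoc a.2 b.2 c.2
  one_mul a := by
    refine Prod.ext ?_ ?_
    · funext x
      show (1 : H → G) (a.2 * x) * a.1 x = a.1 x
      simp
    · exact one_mul a.2
  mul_one a := by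
    refine Prod.ext ?_ ?_
    · funext x
      show a.1 ((1 : H) * x) * (1 : H → G) x = a.1 x
      simp
    · exact mul_one a.2
  inv_mul_cancel a := by
    refine Prod.ext ?_ ?_
    · funext x
      show (a.1 (a.2⁻¹ * (a.2 * x)))⁻¹ * a.1 x = (1 : H → G) x
      simp [← mul_assoc]
    · exact inv_mul_cancel a.2

@[simp] theorem mul_def (a b : Wr G H) :
    a * b = (fun x => a.1 (b.2 * x) * b.1 x, a.2 * b.2) := rfl

end Wr

/-!
Approximate `H` by a Følner set `F` and `G` by a sofic approximation `ψ : G → Sym(A)` on the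
finitely many `G`-entries that matter. The model space is `F × A^T` for a finite window `T ⊆ H`:
`a = (u, h)` moves `f ∈ F` to (roughly) `h f` and acts on the coordinate `ω y` by `ψ (u (f y))`.
Composition is respected except at the few `f` that `F` pushes out of itself, and at the `ω`
having some coordinate in the small set where `ψ` fails to be multiplicative (at most `|T| δ`).
Elements with distinct `H`-parts move almost every `f` differently; elements with equal
`H`-parts differ at some `x ∈ f T`, and `ψ` separates the coordinate `ω (f⁻¹ x)`.
-/

open Finset Equiv Pointwise

section Density

variable {α β : Type*} [Fintype α] [Fintype β]

lemma hamDist_eq_dens [DecidableEq α] (σ τ : Perm α) :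
    hamDist σ τ = (({x | σ x ≠ τ x} : Finset α).dens : ℝ) := by
  rw [hamDist, nnratCast_dens, Nat.card_eq_fintype_card, Fintype.card_subtype]

lemma hamDist_eq_one_sub_dens [Nonempty α] [DecidableEq α] (σ τ : Perm α) :
    hamDist σ τ = 1 - (({x | σ x = τ x} : Finset α).dens : ℝ) := by
  rw [hamDist_eq_dens, eq_sub_iff_add_eq, ← NNRat.cast_add, add_comm,
    dens_filter_add_dens_filter_not_eq_dens, dens_univ, NNRat.cast_one]

lemma hamDist_permCongr (e : α ≃ β) (σ τ : Perm α) :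
    hamDist (e.permCongr σ) (e.permCongr τ) = hamDist σ τ := by
  unfold hamDist
  rw [Fintype.card_congr e.symm]
  congr 2
  exact Nat.card_congr (e.symm.subtypeEquiv fun b => by simp [Equiv.permCongr_apply])

lemma dens_filter_fst [Nonempty β] (p : α → Prop) [DecidablePred p] :
    ({v : α × β | p v.1} : Finset _).dens = ({a | p a} : Finset α).dens := by
  rw [show ({v : α × β | p v.1} : Finset _) = ({a | p a} : Finset α) ×ˢ univ by ext; simp,
    dens, dens, card_product, card_univ, Fintype.card_prod, Nat.cast_mul, Nat.cast_mul,
    mul_div_mul_right _ _ (by positivity)]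

lemma card_filter_prod (P : α → β → Prop) [∀ a, DecidablePred (P a)] :
    #({v : α × β | P v.1 v.2} : Finset _) = ∑ a, #({b | P a b} : Finset β) := by
  simp only [card_filter, Fintype.sum_prod_type]

lemma dens_filter_prod_le [Nonempty α] (P : α → β → Prop) [∀ a, DecidablePred (P a)]
    {m : ℝ} (h : ∀ a, (({b | P a b} : Finset β).dens : ℝ) ≤ m) :
    (({v : α × β | P v.1 v.2} : Finset _).dens : ℝ) ≤ m := by
  have hα : (0 : ℝ) < Fintype.card α := by positivity
  rw [nnratCast_dens, card_filter_prod, Fintype.card_prod, Nat.cast_mul, Nat.cast_sum,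
    mul_comm, ← div_div, div_le_iff₀ hα, sum_div]
  simp only [← nnratCast_dens]
  calc ∑ a, (({b | P a b} : Finset β).dens : ℝ) ≤ ∑ _a : α, m := sum_le_sum fun a _ => h a
    _ = m * Fintype.card α := by rw [sum_const, card_univ, nsmul_eq_mul, mul_comm]

variable {ι : Type*} [Fintype ι] [DecidableEq ι] [DecidableEq α] [Nonempty α]

lemma dens_filter_apply_mem (i : ι) (s : Finset α) :
    ({f : ι → α | f i ∈ s} : Finset _).dens = s.dens := by
  rw [← dens_map_equiv (e := funSplitAt i α), map_filter, map_univ_equiv]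
  convert dens_filter_fst (β := {j // j ≠ i} → α) (· ∈ s) using 3
  · simp
  · exact (filter_univ_mem s).symm

lemma dens_filter_apply_mem_le [Nonempty β] (i : β → ι) (B : β → Finset α) {m : ℝ}
    (hB : ∀ b, ((B b).dens : ℝ) ≤ m) :
    (({v : β × (ι → α) | v.2 (i v.1) ∈ B v.1} : Finset _).dens : ℝ) ≤ m :=
  (dens_filter_prod_le (fun b (ω : ι → α) => ω (i b) ∈ B b) fun b => by
    rw [dens_filter_apply_mem]; exact hB b :)

end Density

section ProductSpace

variable {α ι A : Type*} [Fintype α] [DecidableEq α] [Nonempty α] [Fintype ι] [DecidableEq ι]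
  [Fintype A] [DecidableEq A] [Nonempty A] (σ τ : Perm (α × (ι → A)))

lemma hamDist_le_dens_add_card_mul (p : α → Prop) [DecidablePred p] (B : α → ι → Finset A)
    {m : ℝ} (hB : ∀ a i, ((B a i).dens : ℝ) ≤ m)
    (h : ∀ a ω, ¬ p a → (∀ i, ω i ∉ B a i) → σ (a, ω) = τ (a, ω)) :
    hamDist σ τ ≤ ({a | p a} : Finset α).dens + Fintype.card ι * m := by
  have hsub : ({v | σ v ≠ τ v} : Finset _) ⊆ ({v : α × (ι → A) | p v.1} : Finset _) ∪
      univ.biUnion fun i => {v | v.2 i ∈ B v.1 i} := by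
    intro v hv
    contrapose! hv
    simp_all
  calc hamDist σ τ
      ≤ ({v : α × (ι → A) | p v.1} : Finset _).dens
        + ∑ i, (({v : α × (ι → A) | v.2 i ∈ B v.1 i} : Finset _).dens : ℝ) := by
        rw [hamDist_eq_dens]
        have := (dens_le_dens hsub).trans <| (dens_union_le _ _).trans <|
          add_le_add_right dens_biUnion_le _
        exact_mod_cast this
    _ ≤ ({a | p a} : Finset α).dens + ∑ _i : ι, m := by
        rw [dens_filter_fst]
        gcongr with i
        exact (dens_filter_apply_mem_le (ι := ι) (fun _ => i) (B · i) (hB · i) :)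
    _ = ({a | p a} : Finset α).dens + Fintype.card ι * m := by
        rw [sum_const, card_univ, nsmul_eq_mul]

lemma one_sub_dens_le_hamDist (p : α → Prop) [DecidablePred p]
    (h : ∀ a ω, σ (a, ω) = τ (a, ω) → p a) :
    1 - (({a | p a} : Finset α).dens : ℝ) ≤ hamDist σ τ := by
  rw [hamDist_eq_one_sub_dens, ← dens_filter_fst (β := ι → A)]
  gcongr with v
  exact h v.1 v.2

lemma one_sub_le_hamDist (i : α → ι) (B : α → Finset A) {m : ℝ}
    (hB : ∀ a, ((B a).dens : ℝ) ≤ m)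
    (h : ∀ a ω, σ (a, ω) = τ (a, ω) → ω (i a) ∈ B a) :
    1 - m ≤ hamDist σ τ := by
  have hagree : (({v | σ v = τ v} : Finset _).dens : ℝ)
      ≤ ({v : α × (ι → A) | v.2 (i v.1) ∈ B v.1} : Finset _).dens := by
    gcongr with v
    exact h v.1 v.2
  rw [hamDist_eq_one_sub_dens]
  linarith [dens_filter_apply_mem_le i B hB]

end ProductSpace

/-- `IsSofic` asks for models in `Type`; here they may live in any universe. -/
lemma isSofic_of_forall_exists {G : Type*} [Group G]
    (h : ∀ (K : Finset G) (ε : ℝ), 0 < ε →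
      ∃ (V : Type*) (_ : Fintype V) (_ : Nonempty V) (φ : G → Perm V),
      (∀ k₁ ∈ K, ∀ k₂ ∈ K, hamDist (φ (k₁ * k₂)) (φ k₁ * φ k₂) ≤ ε) ∧
      (∀ k₁ ∈ K, ∀ k₂ ∈ K, k₁ ≠ k₂ → 1 - ε ≤ hamDist (φ k₁) (φ k₂))) :
    IsSofic G := by
  intro K ε hε
  obtain ⟨V, _, _, φ, hmul, hsep⟩ := h K ε hε
  let e := Fintype.equivFin V
  refine ⟨Fin (Fintype.card V), inferInstance, ⟨e (Classical.arbitrary V)⟩,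
    fun g => e.permCongr (φ g), fun k₁ h₁ k₂ h₂ => ?_, fun k₁ h₁ k₂ h₂ hne => ?_⟩
  · rw [← permCongr_mul, hamDist_permCongr]
    exact hmul k₁ h₁ k₂ h₂
  · rw [hamDist_permCongr]
    exact hsep k₁ h₁ k₂ h₂ hne

lemma Finset.exists_perm_coe_apply_eq_mul {H : Type*} [Group H] (F : Finset H) (h : H) :
    ∃ σ : Perm F, ∀ f : F, h * (f : H) ∈ F → (σ f : H) = h * f := by
  classical
  let e : {f : F // h * (f : H) ∈ F} ≃ {f : F // h⁻¹ * (f : H) ∈ F} :=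
    { toFun f := ⟨⟨h * f.1, f.2⟩, by simp⟩
      invFun f := ⟨⟨h⁻¹ * f.1, f.2⟩, by simp⟩
      left_inv f := by simp
      right_inv f := by simp }
  exact ⟨e.extendSubtype, fun f hf => by rw [e.extendSubtype_apply_of_mem f hf]; rfl⟩

lemma Finset.exists_forall_ne_apply {α β : Type*} (U : Finset (α → β)) :
    ∃ X : Finset α, ∀ u ∈ U, ∀ v ∈ U, u ≠ v → ∃ x ∈ X, u x ≠ v x := by
  classical
  refine ⟨(U ×ˢ U).biUnion fun p =>
    if h : p.1 = p.2 then ∅ else {(Function.ne_iff.mp h).choose}, fun u hu v hv huv => ?_⟩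
  have hex := Function.ne_iff.mp huv
  exact ⟨hex.choose, mem_biUnion.mpr ⟨(u, v), mem_product.mpr ⟨hu, hv⟩, by simp [huv]⟩,
    hex.choose_spec⟩

lemma Finset.dens_filter_coe {H : Type*} [DecidableEq H] (F : Finset H) (p : H → Prop)
    [DecidablePred p] :
    (({f : F | p f} : Finset F).dens : ℝ) = #{x ∈ F | p x} / #F := by
  rw [nnratCast_dens, univ_eq_attach, filter_attach, card_map, card_attach, Fintype.card_coe]

lemma IsAmenableFolner.exists_dens_mul_notMem_lt {H : Type*} [Group H] [DecidableEq H]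
    (hH : IsAmenableFolner H) (S : Finset H) {ε : ℝ} (hε : 0 < ε) :
    ∃ F : Finset H, F.Nonempty ∧
      ∀ s ∈ S, (({f : F | s * f ∉ F} : Finset F).dens : ℝ) < ε := by
  obtain ⟨F, hF, hFol⟩ := hH (S.image (·⁻¹)) ε hε
  refine ⟨F, hF, fun s hs => ?_⟩
  have hout : {x ∈ F | s * x ∉ F} = F \ F.image (s⁻¹ * ·) := by
    ext x
    simp only [mem_filter, mem_sdiff, mem_image, inv_mul_eq_iff_eq_mul, exists_eq_right]
  rw [dens_filter_coe F (s * · ∉ F), hout, div_lt_iff₀ (by exact_mod_cast hF.card_pos)]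
  exact hFol _ (mem_image_of_mem _ hs)

namespace Wr

variable {G H : Type*} [Group G] [Group H]

@[simp] lemma fst_mul (a b : Wr G H) (x : H) : (a * b).fst x = a.fst (b.snd * x) * b.fst x := rfl

@[simp] lemma snd_mul (a b : Wr G H) : (a * b).snd = a.snd * b.snd := rfl

lemma fst_ne_of_ne_of_snd_eq {a b : Wr G H} (hab : a ≠ b) (h : a.snd = b.snd) : a.fst ≠ b.fst :=
  fun h' => hab (Prod.ext h' h)

end Wr

section Model

variable {G H : Type*} [Group G] [Group H] {F T : Finset H} {A : Type*}
  {σ : H → Perm F} {ψ : G → Perm A}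

variable (T σ ψ) in
def wrModel (a : Wr G H) : Perm (F × (T → A)) :=
  (σ a.snd).prodShear fun f => Equiv.piCongrRight fun y : T => ψ (a.fst (f * y))

lemma wrModel_apply (a : Wr G H) (f : F) (ω : T → A) :
    wrModel T σ ψ a (f, ω) = (σ a.snd f, fun y : T => ψ (a.fst (f * y)) (ω y)) := rfl

variable [DecidableEq H] [Nonempty F] [Fintype A] [DecidableEq A] [Nonempty A]

lemma hamDist_wrModel_mul_le (hσ : ∀ h (f : F), h * (f : H) ∈ F → (σ h f : H) = h * f)
    (a b : Wr G H) {δ : ℝ} (hψ : ∀ x ∈ F * T,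
      hamDist (ψ (a.fst (b.snd * x) * b.fst x)) (ψ (a.fst (b.snd * x)) * ψ (b.fst x)) ≤ δ) :
    hamDist (wrModel T σ ψ (a * b)) (wrModel T σ ψ a * wrModel T σ ψ b) ≤
      (({f : F | b.snd * f ∉ F} : Finset F).dens : ℝ)
        + ({f : F | a.snd * b.snd * f ∉ F} : Finset F).dens + #T * δ := by
  have hB (f : F) (y : T) :
      (({q | ψ (a.fst (b.snd * (f * y)) * b.fst (f * y)) q
        ≠ (ψ (a.fst (b.snd * (f * y))) * ψ (b.fst (f * y))) q} : Finset A).dens : ℝ)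
      ≤ δ := by
    rw [← hamDist_eq_dens]
    exact hψ _ (mul_mem_mul f.2 y.2)
  refine (hamDist_le_dens_add_card_mul _ _
    (fun f : F => b.snd * f ∉ F ∨ a.snd * b.snd * f ∉ F) _ hB fun f ω hf hω => ?_).trans ?_
  · push Not at hf
    have h1 := hσ _ _ hf.1
    have h2 : (σ a.snd (σ b.snd f) : H) = a.snd * b.snd * f := by
      rw [hσ _ _ (by rw [h1, ← mul_assoc]; exact hf.2), h1, mul_assoc]
    simp only [Perm.mul_apply, wrModel_apply, Prod.mk.injEq]
    refine ⟨Subtype.ext (by rw [h2, Wr.snd_mul, hσ _ _ hf.2]), funext fun y => ?_⟩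
    have hy := hω y
    simp only [mem_filter, mem_univ, true_and, not_not] at hy
    rw [Wr.fst_mul, h1, mul_assoc, hy, Perm.mul_apply]
  · rw [filter_or, Fintype.card_coe]
    gcongr
    exact_mod_cast dens_union_le _ _

lemma one_sub_dens_le_hamDist_wrModel
    (hσ : ∀ h (f : F), h * (f : H) ∈ F → (σ h f : H) = h * f) {a b : Wr G H}
    (hab : a.snd ≠ b.snd) :
    1 - ((({f : F | a.snd * f ∉ F} : Finset F).dens : ℝ)
      + ({f : F | b.snd * f ∉ F} : Finset F).dens)
      ≤ hamDist (wrModel T σ ψ a) (wrModel T σ ψ b) := by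
  refine le_trans ?_ (one_sub_dens_le_hamDist _ _ (fun f : F => a.snd * f ∉ F ∨ b.snd * f ∉ F)
    fun f ω heq => ?_)
  · rw [filter_or]
    gcongr
    exact_mod_cast dens_union_le _ _
  · by_contra! hf
    have := congrArg (fun v => (v.1 : H)) heq
    simp only [wrModel_apply, hσ _ _ hf.1, hσ _ _ hf.2] at this
    exact hab (mul_right_cancel this)

lemma one_sub_le_hamDist_wrModel {a b : Wr G H} {x : H} (hx : ∀ f ∈ F, f⁻¹ * x ∈ T)
    {δ : ℝ} (hψ : 1 - δ ≤ hamDist (ψ (a.fst x)) (ψ (b.fst x))) :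
    1 - δ ≤ hamDist (wrModel T σ ψ a) (wrModel T σ ψ b) := by
  let y (f : F) : T := ⟨(f : H)⁻¹ * x, hx f f.2⟩
  refine one_sub_le_hamDist _ _ y (fun _ => {q | ψ (a.fst x) q = ψ (b.fst x) q}) (m := δ)
    (fun _ => ?_) fun f ω heq => ?_
  · linarith [hamDist_eq_one_sub_dens (ψ (a.fst x)) (ψ (b.fst x))]
  · have := congrFun (congrArg Prod.snd heq) (y f)
    simpa [wrModel_apply, y] using this

end Model

/-- Theorem A: the unrestricted wreath product of a sofic group by an amenable
group is sofic. -/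
theorem wr_sofic {G H : Type*} [Group G] [Group H] [DecidableEq H]
    (hG : IsSofic G) (hH : IsAmenableFolner H) : IsSofic (Wr G H) := by
  classical
  refine isSofic_of_forall_exists fun K ε hε => ?_
  obtain ⟨F, hF, hFol⟩ := hH.exists_dens_mul_notMem_lt
    (K.image Wr.snd ∪ image₂ (fun a b : Wr G H => a.snd * b.snd) K K)
    (by positivity : 0 < ε / 4)
  have : Nonempty F := hF.to_subtype
  obtain ⟨X, hX⟩ := (K.image Wr.fst).exists_forall_ne_apply
  set T := F⁻¹ * X
  set δ := ε / 2 / (#T + 1)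
  have hδ0 : 0 < δ := by positivity
  have hδ : #T * δ + δ = ε / 2 := by rw [← add_one_mul, mul_div_cancel₀ _ (by positivity)]
  have hTδ : 0 ≤ #T * δ := by positivity
  set P := X ∪ (F * T ∪ K.image Wr.snd * (F * T))
  set D := image₂ (fun (a : Wr G H) x => a.fst x) K P
  have hD (a) (ha : a ∈ K) (x) (hx : x ∈ P) : a.fst x ∈ D := mem_image₂_of_mem ha hx
  obtain ⟨A, _, _, ψ, hψmul, hψsep⟩ := hG D δ hδ0
  choose σ hσ using F.exists_perm_coe_apply_eq_mul
  refine ⟨F × (T → A), inferInstance, inferInstance, wrModel T σ ψ, fun a ha b hb => ?_,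
    fun a ha b hb hab => ?_⟩
  · have := hamDist_wrModel_mul_le hσ a b fun x hx => hψmul _
      (hD a ha _ (mem_union_right _ (mem_union_right _ (mul_mem_mul (mem_image_of_mem _ hb) hx))))
      _ (hD b hb _ (mem_union_right _ (mem_union_left _ hx)))
    linarith [hFol _ (mem_union_left _ (mem_image_of_mem _ hb)),
      hFol _ (mem_union_right _ (mem_image₂_of_mem ha hb))]
  · by_cases hsnd : a.snd = b.snd
    · obtain ⟨x, hxX, hx⟩ := hX _ (mem_image_of_mem _ ha) _ (mem_image_of_mem _ hb)
        (Wr.fst_ne_of_ne_of_snd_eq hab hsnd)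
      have := one_sub_le_hamDist_wrModel (T := T) (σ := σ)
        (fun f hf => mul_mem_mul (inv_mem_inv hf) hxX)
        (hψsep _ (hD a ha x (mem_union_left _ hxX)) _ (hD b hb x (mem_union_left _ hxX)) hx)
      linarith
    · linarith [one_sub_dens_le_hamDist_wrModel (T := T) (ψ := ψ) hσ hsnd,
        hFol _ (mem_union_left _ (mem_image_of_mem _ ha)),
        hFol _ (mem_union_left _ (mem_image_of_mem _ hb))]
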